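/- The following statements are equivalent: (a) 𝓜₁ := {(λ∘A_u, λ(ω_u)) : (u,λ) ∈ 𝒰×S⁺} + ℝ₊(0_{X*},1) is a closed and convex subset of X*×ℝ (weak*-topology on X* times the usual topology on ℝ), where ℝ₊(0_{X*},1) := {(0,μ) : μ ≥ 0}; (b) for every c ∈ X* such that inf_{x∈F} ⟨c,x⟩ > −∞, there exists (ū, λ̄) ∈ 𝒰 × S⁺ with λ̄∘A_ū = −c and −λ̄(ω_ū) = inf_{x∈F} ⟨c,x⟩ (stable robust strong duality for the pair (RLP_c)–(RLD_c)). -/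

import Mathlib

/-!
Write `K` for the set of pairs `(c, r) ∈ X* × ℝ` with `⟨c, x⟩ ≤ r` on `F`. Weak duality gives
`𝓜₁ ⊆ K`, and stable strong duality is exactly `K ⊆ 𝓜₁`: it amounts to
`(-c, -inf_F c) ∈ 𝓜₁`. Since `K` is closed and convex, (b) gives (a).

Conversely, let `𝓜₁` be closed and convex; it is a cone, so a point `q ∈ K \ 𝓜₁` is separated
from it by a functional `(v, s) ↦ v x₀ + s t` with `t ≥ 0`, nonnegative on `𝓜₁` and negative
at `q`. By the bipolar theorem for `S`, nonnegativity on `𝓜₁` says `A_u(-x₀) - t ω_u ∈ -S` for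
all `u`, i.e. `(-x₀, t)` lies in the homogenization of the system defining `F`. An inequality
valid on the nonempty set `F` stays valid on its homogenization, which contradicts the sign of
the functional at `q`.
-/

open Filter Topology Pointwise

instance WeakDual.instLocallyConvexSpace {X : Type*} [AddCommGroup X] [Module ℝ X]
    [TopologicalSpace X] : LocallyConvexSpace ℝ (WeakDual ℝ X) :=
  WeakBilin.locallyConvexSpace

theorem WeakDual.exists_apply_prod_eq {X : Type*} [AddCommGroup X] [Module ℝ X]
    [TopologicalSpace X] (φ : StrongDual ℝ (WeakDual ℝ X × ℝ)) :
    ∃ (x : X) (t : ℝ), ∀ v s, φ (v, s) = v x + s * t := by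
  obtain ⟨x, hx⟩ := LinearMap.dualEmbedding_surjective (topDualPairing ℝ X)
    (φ.comp (ContinuousLinearMap.inl ℝ _ ℝ))
  refine ⟨x, φ (0, 1), fun v s => ?_⟩
  have hv : φ (v, 0) = v x := (DFunLike.congr_fun hx v).symm
  rw [← hv, ← smul_eq_mul, ← map_smul, ← map_add]
  simp

theorem exists_dual_nonneg_on_of_notMem {E : Type*} [TopologicalSpace E] [AddCommGroup E]
    [Module ℝ E] [IsTopologicalAddGroup E] [ContinuousSMul ℝ E] [LocallyConvexSpace ℝ E]
    {C : Set E} (hclosed : IsClosed C) (hconv : Convex ℝ C) (hne : C.Nonempty)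
    (hsmul : ∀ r : ℝ, 0 ≤ r → ∀ x ∈ C, r • x ∈ C) {x₀ : E} (hx₀ : x₀ ∉ C) :
    ∃ f : StrongDual ℝ E, (∀ x ∈ C, 0 ≤ f x) ∧ f x₀ < 0 := by
  obtain ⟨f, u, hfx₀, hfC⟩ := geometric_hahn_banach_point_closed hconv hclosed hx₀
  obtain ⟨x, hx⟩ := hne
  have hu : u < 0 := by simpa using hfC _ (hsmul 0 le_rfl x hx)
  refine ⟨f, fun x hx => ?_, hfx₀.trans hu⟩
  by_contra! hfx
  simpa [hfx.ne] using hfC ((u * (f x)⁻¹) • x)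
    (hsmul _ (mul_pos_of_neg_of_neg hu (inv_lt_zero.2 hfx)).le x hx)

theorem apply_le_mul_of_homogeneous {X ι : Type*} [AddCommGroup X] [Module ℝ X]
    (f : ι → X →ₗ[ℝ] ℝ) (b : ι → ℝ) (c : X →ₗ[ℝ] ℝ) {r : ℝ}
    (hc : ∀ x, (∀ i, f i x ≤ b i) → c x ≤ r) {x₀ : X} (hx₀ : ∀ i, f i x₀ ≤ b i)
    {y : X} {t : ℝ} (ht : 0 ≤ t) (hy : ∀ i, f i y ≤ t * b i) : c y ≤ t * r := by
  -- for `ε > 0`, the point `(ε x₀ + y) / (ε + t)` satisfies the system; then let `ε → 0`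
  have key : ∀ ε > 0, c y - t * r ≤ ε * (r - c x₀) := by
    intro ε hε
    have hεt : 0 < ε + t := by linarith
    have hx := hc ((ε + t)⁻¹ • (ε • x₀ + y)) fun i => by
      rw [map_smul, map_add, map_smul, smul_eq_mul, smul_eq_mul, inv_mul_le_iff₀ hεt]
      nlinarith [hx₀ i, hy i]
    rw [map_smul, map_add, map_smul, smul_eq_mul, smul_eq_mul, inv_mul_le_iff₀ hεt] at hx
    linarith
  have hlim : Tendsto (fun ε : ℝ => ε * (r - c x₀)) (𝓝[>] 0) (𝓝 0) :=
    tendsto_nhdsWithin_of_tendsto_nhds <| by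
      simpa using (continuous_mul_const (r - c x₀)).tendsto 0
  linarith [ge_of_tendsto hlim (eventually_nhdsWithin_of_forall key)]

theorem EReal.coe_le_iInf_coe_iff {α : Type*} {s : Set α} {f : α → ℝ} {r : ℝ} :
    (r : EReal) ≤ ⨅ x : s, (f x : EReal) ↔ ∀ x ∈ s, r ≤ f x := by
  simp [le_iInf_iff]

section RobustLinearProgram

variable {X Z ι : Type*} [AddCommGroup X] [Module ℝ X] [TopologicalSpace X]
  [AddCommGroup Z] [Module ℝ Z] [TopologicalSpace Z]
  (S : Set Z) (A : ι → X →L[ℝ] Z) (ω : ι → Z)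

def robustFeasibleSet : Set X := {x | ∀ u, A u x - ω u ∈ -S}

/-- The set `𝓜₁`. -/
def robustMomentCone : Set (WeakDual ℝ X × ℝ) :=
  {q | ∃ u, ∃ l : WeakDual ℝ Z, (∀ z ∈ S, 0 ≤ l z) ∧ (∀ x, q.1 x = l (A u x)) ∧ q.2 = l (ω u)} +
    {q | q.1 = 0 ∧ 0 ≤ q.2}

def supportEpigraph (F : Set X) : Set (WeakDual ℝ X × ℝ) := {q | ∀ x ∈ F, q.1 x ≤ q.2}

variable {S A ω}

theorem dual_le_of_mem_robustFeasibleSet {x : X} (hx : x ∈ robustFeasibleSet S A ω) (u : ι)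
    {l : WeakDual ℝ Z} (hl : ∀ z ∈ S, 0 ≤ l z) : l (A u x) ≤ l (ω u) := by
  have := hl _ (hx u)
  simp only [map_sub, neg_sub, sub_nonneg] at this
  exact this

theorem mem_of_forall_dual_nonneg [IsTopologicalAddGroup Z] [ContinuousSMul ℝ Z]
    [LocallyConvexSpace ℝ Z] (hS_ne : S.Nonempty) (hS_closed : IsClosed S)
    (hS_conv : Convex ℝ S) (hS_cone : ∀ r : ℝ, 0 ≤ r → ∀ z ∈ S, r • z ∈ S) {z : Z}
    (hz : ∀ l : WeakDual ℝ Z, (∀ s ∈ S, 0 ≤ l s) → 0 ≤ l z) : z ∈ S := by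
  by_contra h
  obtain ⟨f, hfS, hfz⟩ := exists_dual_nonneg_on_of_notMem hS_closed hS_conv hS_ne hS_cone h
  exact hfz.not_ge (hz (StrongDual.toWeakDual f) hfS)

theorem mem_robustFeasibleSet_of_forall_dual [IsTopologicalAddGroup Z] [ContinuousSMul ℝ Z]
    [LocallyConvexSpace ℝ Z] (hS_ne : S.Nonempty) (hS_closed : IsClosed S)
    (hS_conv : Convex ℝ S) (hS_cone : ∀ r : ℝ, 0 ≤ r → ∀ z ∈ S, r • z ∈ S) {x : X}
    (hx : ∀ u, ∀ l : WeakDual ℝ Z, (∀ z ∈ S, 0 ≤ l z) → l (A u x) ≤ l (ω u)) :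
    x ∈ robustFeasibleSet S A ω := fun u =>
  Set.mem_neg.2 <| mem_of_forall_dual_nonneg hS_ne hS_closed hS_conv hS_cone fun l hl => by
    simpa using hx u l hl

theorem mem_robustMomentCone_iff {q : WeakDual ℝ X × ℝ} :
    q ∈ robustMomentCone S A ω ↔ ∃ u, ∃ l : WeakDual ℝ Z,
      (∀ z ∈ S, 0 ≤ l z) ∧ (∀ x, q.1 x = l (A u x)) ∧ l (ω u) ≤ q.2 := by
  constructor
  · rintro ⟨a, ⟨u, l, hl, ha₁, ha₂⟩, p, ⟨hp₁, hp₂⟩, rfl⟩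
    refine ⟨u, l, hl, fun x => ?_, ?_⟩
    · simp [hp₁, ha₁]
    · simp only [Prod.snd_add, ha₂]
      linarith
  · rintro ⟨u, l, hl, hq₁, hq₂⟩
    exact ⟨(q.1, l (ω u)), ⟨u, l, hl, hq₁, rfl⟩, (0, q.2 - l (ω u)),
      ⟨rfl, sub_nonneg.2 hq₂⟩, by ext <;> simp⟩

theorem mk_zero_one_mem_robustMomentCone [Nonempty ι] :
    ((0, 1) : WeakDual ℝ X × ℝ) ∈ robustMomentCone S A ω :=
  mem_robustMomentCone_iff.2
    ⟨Classical.arbitrary ι, 0, fun _ _ => le_rfl, fun _ => rfl, zero_le_one⟩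

theorem smul_mem_robustMomentCone {r : ℝ} (hr : 0 ≤ r) {q : WeakDual ℝ X × ℝ}
    (hq : q ∈ robustMomentCone S A ω) : r • q ∈ robustMomentCone S A ω := by
  obtain ⟨u, l, hl, hq₁, hq₂⟩ := mem_robustMomentCone_iff.1 hq
  exact mem_robustMomentCone_iff.2 ⟨u, r • l, fun z hz => mul_nonneg hr (hl z hz),
    fun x => congrArg (r * ·) (hq₁ x), mul_le_mul_of_nonneg_left hq₂ hr⟩

theorem robustMomentCone_subset_supportEpigraph :
    robustMomentCone S A ω ⊆ supportEpigraph (robustFeasibleSet S A ω) := by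
  intro q hq x hx
  obtain ⟨u, l, hl, hq₁, hq₂⟩ := mem_robustMomentCone_iff.1 hq
  rw [hq₁]
  exact (dual_le_of_mem_robustFeasibleSet hx u hl).trans hq₂

theorem isClosed_supportEpigraph (F : Set X) : IsClosed (supportEpigraph F) := by
  simp only [supportEpigraph, Set.ofPred_forall]
  exact isClosed_biInter fun x _ =>
    isClosed_le ((WeakDual.eval_continuous x).comp continuous_fst) continuous_snd

theorem convex_supportEpigraph (F : Set X) : Convex ℝ (supportEpigraph F) := by
  intro q hq q' hq' a b ha hb _ x hx
  show a * q.1 x + b * q'.1 x ≤ a * q.2 + b * q'.2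
  exact add_le_add (mul_le_mul_of_nonneg_left (hq x hx) ha)
    (mul_le_mul_of_nonneg_left (hq' x hx) hb)

theorem supportEpigraph_subset_robustMomentCone [IsTopologicalAddGroup Z] [ContinuousSMul ℝ Z]
    [LocallyConvexSpace ℝ Z] [Nonempty ι] (hS_ne : S.Nonempty) (hS_closed : IsClosed S)
    (hS_conv : Convex ℝ S) (hS_cone : ∀ r : ℝ, 0 ≤ r → ∀ z ∈ S, r • z ∈ S)
    (hF : (robustFeasibleSet S A ω).Nonempty) (hclosed : IsClosed (robustMomentCone S A ω))
    (hconv : Convex ℝ (robustMomentCone S A ω)) :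
    supportEpigraph (robustFeasibleSet S A ω) ⊆ robustMomentCone S A ω := by
  intro q hqK
  by_contra hqM
  obtain ⟨φ, hφM, hφq⟩ := exists_dual_nonneg_on_of_notMem hclosed hconv
    ⟨_, mk_zero_one_mem_robustMomentCone⟩ (fun _ hr _ hq => smul_mem_robustMomentCone hr hq) hqM
  obtain ⟨x₀, t, hφ⟩ := WeakDual.exists_apply_prod_eq φ
  have ht : 0 ≤ t := by
    have := hφM _ mk_zero_one_mem_robustMomentCone
    rw [hφ] at this
    change 0 ≤ 0 + 1 * t at this
    simpa using this
  let I := {p : ι × WeakDual ℝ Z // ∀ z ∈ S, 0 ≤ p.2 z}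
  let f : I → X →ₗ[ℝ] ℝ := fun i => (WeakDual.toStrongDual i.1.2).comp (A i.1.1)
  have hdir : ∀ i : I, f i (-x₀) ≤ t * i.1.2 (ω i.1.1) := by
    rintro ⟨⟨u, l⟩, hl⟩
    have := hφM (StrongDual.toWeakDual ((WeakDual.toStrongDual l).comp (A u)), l (ω u))
      (mem_robustMomentCone_iff.2 ⟨u, l, hl, fun _ => rfl, le_rfl⟩)
    rw [hφ] at this
    change 0 ≤ l (A u x₀) + l (ω u) * t at this
    change l (A u (-x₀)) ≤ t * l (ω u)
    rw [map_neg, map_neg]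
    linarith
  obtain ⟨x₁, hx₁⟩ := hF
  have hq := apply_le_mul_of_homogeneous f (fun i => i.1.2 (ω i.1.1)) (WeakDual.toStrongDual q.1)
    (r := q.2) (fun x hx => hqK x (mem_robustFeasibleSet_of_forall_dual hS_ne hS_closed hS_conv
      hS_cone fun u l hl => hx ⟨(u, l), hl⟩)) (fun i => dual_le_of_mem_robustFeasibleSet hx₁ _ i.2)
    ht hdir
  change q.1 (-x₀) ≤ t * q.2 at hq
  rw [map_neg] at hq
  rw [← Prod.mk.eta (p := q), hφ] at hφq
  linarith

theorem isClosed_and_convex_robustMomentCone_iff [IsTopologicalAddGroup Z] [ContinuousSMul ℝ Z]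
    [LocallyConvexSpace ℝ Z] [Nonempty ι] (hS_ne : S.Nonempty) (hS_closed : IsClosed S)
    (hS_conv : Convex ℝ S) (hS_cone : ∀ r : ℝ, 0 ≤ r → ∀ z ∈ S, r • z ∈ S)
    (hF : (robustFeasibleSet S A ω).Nonempty) :
    IsClosed (robustMomentCone S A ω) ∧ Convex ℝ (robustMomentCone S A ω) ↔
      supportEpigraph (robustFeasibleSet S A ω) ⊆ robustMomentCone S A ω := by
  refine ⟨fun h => supportEpigraph_subset_robustMomentCone hS_ne hS_closed hS_conv hS_cone hF
    h.1 h.2, fun h => ?_⟩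
  rw [robustMomentCone_subset_supportEpigraph.antisymm h]
  exact ⟨isClosed_supportEpigraph _, convex_supportEpigraph _⟩

theorem supportEpigraph_subset_robustMomentCone_iff (hF : (robustFeasibleSet S A ω).Nonempty) :
    supportEpigraph (robustFeasibleSet S A ω) ⊆ robustMomentCone S A ω ↔
      ∀ c : WeakDual ℝ X, ⊥ < ⨅ x : robustFeasibleSet S A ω, ((c x.1 : ℝ) : EReal) →
        ∃ u, ∃ l : WeakDual ℝ Z, (∀ z ∈ S, 0 ≤ l z) ∧ (∀ x, l (A u x) = -(c x)) ∧
          ((-(l (ω u)) : ℝ) : EReal) = ⨅ x : robustFeasibleSet S A ω, ((c x.1 : ℝ) : EReal) := by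
  constructor
  · intro h c hbot
    obtain ⟨x₁, hx₁⟩ := hF
    have htop : ⨅ x : robustFeasibleSet S A ω, ((c x.1 : ℝ) : EReal) ≠ ⊤ :=
      ne_top_of_le_ne_top (EReal.coe_ne_top (c x₁))
        (iInf_le _ (⟨x₁, hx₁⟩ : robustFeasibleSet S A ω))
    obtain ⟨m, hm⟩ : ∃ m : ℝ, (m : EReal) = ⨅ x : robustFeasibleSet S A ω, ((c x.1 : ℝ) : EReal) :=
      ⟨_, EReal.coe_toReal htop hbot.ne'⟩
    have hmF := EReal.coe_le_iInf_coe_iff.1 hm.le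
    obtain ⟨u, l, hl, hA, hω⟩ := mem_robustMomentCone_iff.1 <|
      h (show (-c, -m) ∈ supportEpigraph _ from fun x hx => neg_le_neg (hmF x hx))
    have hA' : ∀ x, l (A u x) = -(c x) := fun x => (hA x).symm
    refine ⟨u, l, hl, hA', le_antisymm ?_ ?_⟩
    · exact EReal.coe_le_iInf_coe_iff.2 fun x hx => by
        linarith [dual_le_of_mem_robustFeasibleSet hx u hl, hA' x]
    · rw [← hm, EReal.coe_le_coe_iff]
      exact le_neg_of_le_neg hω
  · intro h q hq
    have hbound :
        ((-q.2 : ℝ) : EReal) ≤ ⨅ x : robustFeasibleSet S A ω, (((-q.1) x.1 : ℝ) : EReal) :=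
      EReal.coe_le_iInf_coe_iff.2 fun x hx => neg_le_neg (hq x hx)
    obtain ⟨u, l, hl, hA, hω⟩ := h (-q.1) ((EReal.bot_lt_coe _).trans_le hbound)
    refine mem_robustMomentCone_iff.2 ⟨u, l, hl, fun x => ?_, ?_⟩
    · rw [hA]
      exact (neg_neg _).symm
    · rw [← hω, EReal.coe_le_coe_iff] at hbound
      linarith

end RobustLinearProgram

theorem stmt7_general
    {X Z : Type*}
    [AddCommGroup X] [Module ℝ X] [TopologicalSpace X]
    [AddCommGroup Z] [Module ℝ Z] [TopologicalSpace Z] [IsTopologicalAddGroup Z]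
    [ContinuousSMul ℝ Z] [LocallyConvexSpace ℝ Z]
    (S : Set Z) (hS_ne : S.Nonempty) (hS_closed : IsClosed S) (hS_conv : Convex ℝ S)
    (hS_cone : ∀ r : ℝ, 0 ≤ r → ∀ z ∈ S, r • z ∈ S)
    {ι : Type*} [Nonempty ι] (A : ι → X →L[ℝ] Z) (ω : ι → Z)
    (hF : {x : X | ∀ u : ι, A u x - ω u ∈ -S}.Nonempty) :
    (IsClosed ({q : WeakDual ℝ X × ℝ | ∃ u : ι, ∃ l : WeakDual ℝ Z,
          (∀ z ∈ S, 0 ≤ l z) ∧ (∀ x : X, q.1 x = l (A u x)) ∧ q.2 = l (ω u)} +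
        {q : WeakDual ℝ X × ℝ | q.1 = 0 ∧ 0 ≤ q.2}) ∧
      Convex ℝ ({q : WeakDual ℝ X × ℝ | ∃ u : ι, ∃ l : WeakDual ℝ Z,
          (∀ z ∈ S, 0 ≤ l z) ∧ (∀ x : X, q.1 x = l (A u x)) ∧ q.2 = l (ω u)} +
        {q : WeakDual ℝ X × ℝ | q.1 = 0 ∧ 0 ≤ q.2})) ↔
    (∀ c : WeakDual ℝ X,
      ⊥ < ⨅ x : {x : X | ∀ u : ι, A u x - ω u ∈ -S}, ((c x.1 : ℝ) : EReal) →
      ∃ u : ι, ∃ l : WeakDual ℝ Z, (∀ z ∈ S, 0 ≤ l z) ∧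
        (∀ x : X, l (A u x) = -(c x)) ∧
        ((-(l (ω u)) : ℝ) : EReal) =
          ⨅ x : {x : X | ∀ u : ι, A u x - ω u ∈ -S}, ((c x.1 : ℝ) : EReal)) :=
  (isClosed_and_convex_robustMomentCone_iff hS_ne hS_closed hS_conv hS_cone hF).trans
    (supportEpigraph_subset_robustMomentCone_iff hF)

/-- Corollary 2.4 / `thm_lStrD`: characterization of stable robust strong duality for the
robust linear problem (RLP_c) with affine mappings, via the moment cone 𝓜₁. -/
theorem stmt7
    {X Z : Type*}
    [AddCommGroup X] [Module ℝ X] [TopologicalSpace X] [IsTopologicalAddGroup X]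
    [ContinuousSMul ℝ X] [LocallyConvexSpace ℝ X] [T2Space X]
    [AddCommGroup Z] [Module ℝ Z] [TopologicalSpace Z] [IsTopologicalAddGroup Z]
    [ContinuousSMul ℝ Z] [LocallyConvexSpace ℝ Z] [T2Space Z]
    (S : Set Z) (hS_ne : S.Nonempty) (hS_closed : IsClosed S) (hS_conv : Convex ℝ S)
    (hS_cone : ∀ r : ℝ, 0 ≤ r → ∀ z ∈ S, r • z ∈ S)
    {ι : Type*} [Nonempty ι] (A : ι → X →L[ℝ] Z) (ω : ι → Z)
    (hF : {x : X | ∀ u : ι, A u x - ω u ∈ -S}.Nonempty) :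
    (IsClosed ({q : WeakDual ℝ X × ℝ | ∃ u : ι, ∃ l : WeakDual ℝ Z,
          (∀ z ∈ S, 0 ≤ l z) ∧ (∀ x : X, q.1 x = l (A u x)) ∧ q.2 = l (ω u)} +
        {q : WeakDual ℝ X × ℝ | q.1 = 0 ∧ 0 ≤ q.2}) ∧
      Convex ℝ ({q : WeakDual ℝ X × ℝ | ∃ u : ι, ∃ l : WeakDual ℝ Z,
          (∀ z ∈ S, 0 ≤ l z) ∧ (∀ x : X, q.1 x = l (A u x)) ∧ q.2 = l (ω u)} +
        {q : WeakDual ℝ X × ℝ | q.1 = 0 ∧ 0 ≤ q.2})) ↔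
    (∀ c : WeakDual ℝ X,
      ⊥ < ⨅ x : {x : X | ∀ u : ι, A u x - ω u ∈ -S}, ((c x.1 : ℝ) : EReal) →
      ∃ u : ι, ∃ l : WeakDual ℝ Z, (∀ z ∈ S, 0 ≤ l z) ∧
        (∀ x : X, l (A u x) = -(c x)) ∧
        ((-(l (ω u)) : ℝ) : EReal) =
          ⨅ x : {x : X | ∀ u : ι, A u x - ω u ∈ -S}, ((c x.1 : ℝ) : EReal)) :=
  stmt7_general S hS_ne hS_closed hS_conv hS_cone A ω hF
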